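/- Trust-region worst-case update bound (Lemma A.1, operational form): in a finite discounted MDP, let δ > 0, let F : S → A → ℝ be a signal, and let π, π' be policies with (π s a = 0 → π' s a = 0) such that D̄_KL(π'‖π) ≤ δ and 𝔸_F(π,π') ≥ 0 (these conditions hold when π' solves the trust-region subproblem maximizing 𝔸_F(π,·) subject to D̄_KL(·‖π) ≤ δ over a class containing π). Then J_F(π') − J_F(π) ≥ − √(2δ) · γ · ε_F(π,π') / (1−γ)². -/

import Mathlib

open Real BigOperators

/-- Induced transition matrix of policy `pol`: `P_pol(s,s') = ∑ a, pol s a * P s a s'`. -/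
noncomputable def transMat {S A : Type*} [Fintype A] (P : S → A → S → ℝ)
    (pol : S → A → ℝ) : Matrix S S ℝ :=
  fun s s' => ∑ a, pol s a * P s a s'

/-- Discounted state visitation distribution
`d_pol(s) = (1-γ) ∑ₜ γ^t ∑_{s0} ρ0 s0 * (P_pol^t)(s0,s)`. -/
noncomputable def dVisit {S A : Type*} [Fintype S] [DecidableEq S] [Fintype A]
    (P : S → A → S → ℝ) (γ : ℝ) (ρ0 : S → ℝ) (pol : S → A → ℝ) (s : S) : ℝ :=
  (1 - γ) * ∑' t : ℕ, γ ^ t * ∑ s0, ρ0 s0 * (transMat P pol ^ t) s0 s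

/-- Value function of signal `F` under policy `pol`. -/
noncomputable def Vfun {S A : Type*} [Fintype S] [DecidableEq S] [Fintype A]
    (P : S → A → S → ℝ) (γ : ℝ) (F : S → A → ℝ) (pol : S → A → ℝ) (s : S) : ℝ :=
  ∑' t : ℕ, γ ^ t * ∑ s', (transMat P pol ^ t) s s' * ∑ a, pol s' a * F s' a

/-- Return `J_F(pol) = ∑ s, ρ0 s * V_F^pol(s)`. -/
noncomputable def Jret {S A : Type*} [Fintype S] [DecidableEq S] [Fintype A]
    (P : S → A → S → ℝ) (γ : ℝ) (ρ0 : S → ℝ) (F : S → A → ℝ) (pol : S → A → ℝ) : ℝ :=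
  ∑ s, ρ0 s * Vfun P γ F pol s

/-- Action-value function `Q_F^pol(s,a) = F s a + γ ∑_{s'} P s a s' * V_F^pol(s')`. -/
noncomputable def Qfun {S A : Type*} [Fintype S] [DecidableEq S] [Fintype A]
    (P : S → A → S → ℝ) (γ : ℝ) (F : S → A → ℝ) (pol : S → A → ℝ) (s : S) (a : A) : ℝ :=
  F s a + γ * ∑ s', P s a s' * Vfun P γ F pol s'

/-- Advantage function `A_F^pol(s,a) = Q_F^pol(s,a) - V_F^pol(s)`. -/
noncomputable def Adv {S A : Type*} [Fintype S] [DecidableEq S] [Fintype A]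
    (P : S → A → S → ℝ) (γ : ℝ) (F : S → A → ℝ) (pol : S → A → ℝ) (s : S) (a : A) : ℝ :=
  Qfun P γ F pol s a - Vfun P γ F pol s

/-- Expected surrogate advantage
`𝔸_F(pol,pol') = ∑ s, d_pol(s) ∑ a, pol' s a * A_F^pol(s,a)`. -/
noncomputable def surrAdv {S A : Type*} [Fintype S] [DecidableEq S] [Fintype A]
    (P : S → A → S → ℝ) (γ : ℝ) (ρ0 : S → ℝ) (F : S → A → ℝ)
    (pol pol' : S → A → ℝ) : ℝ :=
  ∑ s, dVisit P γ ρ0 pol s * ∑ a, pol' s a * Adv P γ F pol s a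

/-- `ε_F(pol,pol') = max_s |∑ a, pol' s a * A_F^pol(s,a)|`. -/
noncomputable def epsAdv {S A : Type*} [Fintype S] [DecidableEq S] [Fintype A] [Nonempty S]
    (P : S → A → S → ℝ) (γ : ℝ) (F : S → A → ℝ) (pol pol' : S → A → ℝ) : ℝ :=
  Finset.univ.sup' Finset.univ_nonempty fun s => |∑ a, pol' s a * Adv P γ F pol s a|

/-- Per-state KL divergence `KL(pol'‖pol)(s) = ∑ a, pol' s a * log (pol' s a / pol s a)`
(with the convention `0 * log 0 = 0`, automatic since `Real.log 0 = 0`). -/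
noncomputable def klState {S A : Type*} [Fintype A] (pol' pol : S → A → ℝ) (s : S) : ℝ :=
  ∑ a, pol' s a * Real.log (pol' s a / pol s a)

/-- Averaged KL divergence `D̄_KL(pol'‖pol) = ∑ s, d_pol(s) * KL(pol'‖pol)(s)`. -/
noncomputable def avgKL {S A : Type*} [Fintype S] [DecidableEq S] [Fintype A]
    (P : S → A → S → ℝ) (γ : ℝ) (ρ0 : S → ℝ) (pol' pol : S → A → ℝ) : ℝ :=
  ∑ s, dVisit P γ ρ0 pol s * klState pol' pol s

/-!
The performance-difference identity writes `(1 - γ) (J(π') - J(π))` as `d_{π'} ⬝ᵥ f`, where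
`f s = ∑ₐ π'(s, a) A^π(s, a)` is bounded by `ε`; this is the surrogate advantage `d_π ⬝ᵥ f ≥ 0` plus
the shift term `(d_{π'} - d_π) ⬝ᵥ f ≥ -‖d_{π'} - d_π‖₁ ε`. Subtracting the flow equations
`d = (1 - γ) ρ₀ + γ d P_π` of the two visitation distributions gives
`(1 - γ) ‖d_{π'} - d_π‖₁ ≤ γ 𝔼_{s ∼ d_π} ‖π'(s) - π(s)‖₁`, and Pinsker's inequality together with
Cauchy–Schwarz bounds this expectation by `√(2 D̄_KL(π' ‖ π)) ≤ √(2δ)`.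
-/

open Finset Matrix InformationTheory

lemma monotoneOn_add_one_mul_log_sub :
    MonotoneOn (fun x : ℝ => (x + 1) * log x - 2 * (x - 1)) (Set.Ioi 0) := by
  have hderiv : ∀ x : ℝ, 0 < x → HasDerivAt (fun x : ℝ => (x + 1) * log x - 2 * (x - 1))
      (log x - (1 - x⁻¹)) x := by
    intro x hx
    refine ((((hasDerivAt_id' x).add_const 1).mul (hasDerivAt_log hx.ne')).sub
      (((hasDerivAt_id' x).sub_const 1).const_mul 2)).congr_deriv ?_
    field_simp
    ring
  refine monotoneOn_of_hasDerivWithinAt_nonneg (convex_Ioi 0)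
    (fun x hx => (hderiv x hx).continuousAt.continuousWithinAt)
    (fun x hx => (hderiv x (interior_subset hx)).hasDerivWithinAt) (fun x hx => ?_)
  have hx : 0 < x := interior_subset hx
  linarith [one_sub_inv_le_log_of_pos hx]

lemma three_mul_sq_sub_one_le_klFun {x : ℝ} (hx : 0 ≤ x) :
    3 * (x - 1) ^ 2 ≤ 2 * (x + 2) * klFun x := by
  set h : ℝ → ℝ := fun x => 2 * (x + 2) * klFun x - 3 * (x - 1) ^ 2
  have hcont : Continuous h := by fun_prop (disch := exact continuous_klFun)
  have hderiv : ∀ y : ℝ, 0 < y → HasDerivAt h (4 * ((y + 1) * log y - 2 * (y - 1))) y := by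
    intro y hy
    refine (((((hasDerivAt_id' y).add_const 2).const_mul 2).mul (hasDerivAt_klFun hy.ne')).sub
      ((((hasDerivAt_id' y).sub_const 1).pow 2).const_mul 3)).congr_deriv ?_
    rw [klFun_apply]
    ring
  -- `h' / 4` is increasing and vanishes at `1`, so `h` is minimal at `1`.
  suffices h 1 ≤ h x by simpa [h, klFun_one] using this
  rcases le_total x 1 with hx1 | hx1
  · refine antitoneOn_of_hasDerivWithinAt_nonpos (convex_Icc 0 1) hcont.continuousOn
      (f' := fun y => 4 * ((y + 1) * log y - 2 * (y - 1)))
      (fun y hy => ?_) (fun y hy => ?_) ⟨hx, hx1⟩ ⟨zero_le_one, le_rfl⟩ hx1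
    all_goals rw [interior_Icc] at hy
    · exact (hderiv y hy.1).hasDerivWithinAt
    · have := monotoneOn_add_one_mul_log_sub hy.1 (Set.mem_Ioi.2 one_pos) hy.2.le
      norm_num at this
      linarith
  · refine monotoneOn_of_hasDerivWithinAt_nonneg (convex_Ici 1) hcont.continuousOn
      (f' := fun y => 4 * ((y + 1) * log y - 2 * (y - 1)))
      (fun y hy => ?_) (fun y hy => ?_) Set.self_mem_Ici hx1 hx1
    all_goals rw [interior_Ici] at hy
    · exact (hderiv y (one_pos.trans hy)).hasDerivWithinAt
    · have := monotoneOn_add_one_mul_log_sub (Set.mem_Ioi.2 one_pos)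
        (Set.mem_Ioi.2 (one_pos.trans hy)) hy.le
      norm_num at this
      linarith

lemma mul_klFun_div {p q : ℝ} (hq : q ≠ 0) :
    q * klFun (p / q) = p * log (p / q) - p + q := by
  rw [klFun_apply]
  field_simp
  ring

lemma three_mul_sq_sub_le {p q : ℝ} (hp : 0 ≤ p) (hq : 0 ≤ q) (hpq : q = 0 → p = 0) :
    3 * (p - q) ^ 2 ≤ 2 * (p + 2 * q) * (p * log (p / q) - p + q) := by
  rcases hq.eq_or_lt with rfl | hq
  · simp [hpq rfl]
  have key := mul_le_mul_of_nonneg_left (three_mul_sq_sub_one_le_klFun (div_nonneg hp hq.le))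
    (sq_nonneg q)
  rw [← mul_klFun_div hq.ne']
  have hp' : p = q * (p / q) := by field_simp
  calc 3 * (p - q) ^ 2 = q ^ 2 * (3 * (p / q - 1) ^ 2) := by rw [hp']; field_simp
    _ ≤ q ^ 2 * (2 * (p / q + 2) * klFun (p / q)) := key
    _ = 2 * (p + 2 * q) * (q * klFun (p / q)) := by rw [hp']; field_simp

lemma mul_log_div_sub_add_nonneg {p q : ℝ} (hp : 0 ≤ p) (hq : 0 ≤ q) (hpq : q = 0 → p = 0) :
    0 ≤ p * log (p / q) - p + q := by
  rcases hq.eq_or_lt with rfl | hq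
  · simp [hpq rfl]
  rw [← mul_klFun_div hq.ne']
  exact mul_nonneg hq.le (klFun_nonneg (div_nonneg hp hq.le))

theorem pinsker {ι : Type*} [Fintype ι] {p q : ι → ℝ} (hp : p ∈ stdSimplex ℝ ι)
    (hq : q ∈ stdSimplex ℝ ι) (hpq : ∀ i, q i = 0 → p i = 0) :
    (∑ i, |p i - q i|) ^ 2 ≤ 2 * ∑ i, p i * log (p i / q i) := by
  have hf : ∑ i, (p i + 2 * q i) / 3 = 1 := by
    rw [← sum_div, sum_add_distrib, ← mul_sum, hp.2, hq.2]
    norm_num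
  have hg : ∑ i, 2 * (p i * log (p i / q i) - p i + q i) = 2 * ∑ i, p i * log (p i / q i) := by
    rw [← mul_sum, sum_add_distrib, sum_sub_distrib, hp.2, hq.2]
    ring
  calc (∑ i, |p i - q i|) ^ 2
      ≤ (∑ i, (p i + 2 * q i) / 3) * ∑ i, 2 * (p i * log (p i / q i) - p i + q i) := by
        refine sum_sq_le_sum_mul_sum_of_sq_le_mul _ (fun i _ => ?_) (fun i _ => ?_)
          (fun i _ => ?_)
        · linarith [hp.1 i, hq.1 i]
        · linarith [mul_log_div_sub_add_nonneg (hp.1 i) (hq.1 i) (hpq i)]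
        · rw [sq_abs]
          linarith [three_mul_sq_sub_le (hp.1 i) (hq.1 i) (hpq i)]
    _ = 2 * ∑ i, p i * log (p i / q i) := by rw [hf, hg, one_mul]

section DiscountedSeries

variable {S : Type*} [Fintype S] {γ : ℝ}

lemma summable_pow_mul_of_abs_le (hγ0 : 0 ≤ γ) (hγ1 : γ < 1) {w : ℕ → ℝ} {C : ℝ}
    (hw : ∀ t, |w t| ≤ C) : Summable fun t => γ ^ t * w t := by
  refine ((summable_geometric_of_lt_one hγ0 hγ1).mul_right C).of_norm_bounded fun t => ?_
  rw [norm_mul, norm_pow, Real.norm_of_nonneg hγ0, Real.norm_eq_abs]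
  exact mul_le_mul_of_nonneg_left (hw t) (pow_nonneg hγ0 t)

lemma tsum_pow_mul_sum_mul {g : ℕ → S → ℝ} (hg : ∀ s, Summable fun t => γ ^ t * g t s)
    (c : S → ℝ) : ∑' t, γ ^ t * ∑ s, c s * g t s = ∑ s, c s * ∑' t, γ ^ t * g t s := by
  calc ∑' t, γ ^ t * ∑ s, c s * g t s = ∑' t, ∑ s, c s * (γ ^ t * g t s) :=
        tsum_congr fun t => by rw [mul_sum]; exact sum_congr rfl fun s _ => by ring
    _ = ∑ s, ∑' t, c s * (γ ^ t * g t s) :=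
        Summable.tsum_finsetSum fun s _ => (hg s).mul_left (c s)
    _ = ∑ s, c s * ∑' t, γ ^ t * g t s := by simp_rw [tsum_mul_left]

lemma tsum_pow_mul_eq_add {f : ℕ → ℝ} (hf : Summable fun t => γ ^ t * f t) :
    ∑' t, γ ^ t * f t = f 0 + γ * ∑' t, γ ^ t * f (t + 1) := by
  rw [hf.tsum_eq_zero_add, ← tsum_mul_left]
  simp only [pow_zero, one_mul, pow_succ]
  congr 1
  exact tsum_congr fun t => by ring

variable [DecidableEq S] {M : Matrix S S ℝ}

lemma abs_mulVec_apply_le (hM : M ∈ rowStochastic ℝ S) (v : S → ℝ) (i : S) :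
    |(M *ᵥ v) i| ≤ ∑ j, |v j| := by
  refine (abs_sum_le_sum_abs _ _).trans (sum_le_sum fun j _ => ?_)
  rw [abs_mul, abs_of_nonneg (nonneg_of_mem_rowStochastic hM)]
  exact mul_le_of_le_one_left (abs_nonneg _) (le_one_of_mem_rowStochastic hM)

lemma abs_vecMul_apply_le (hM : M ∈ rowStochastic ℝ S) (v : S → ℝ) (j : S) :
    |(v ᵥ* M) j| ≤ ∑ i, |v i| := by
  refine (abs_sum_le_sum_abs _ _).trans (sum_le_sum fun i _ => ?_)
  rw [abs_mul, abs_of_nonneg (nonneg_of_mem_rowStochastic hM)]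
  exact mul_le_of_le_one_right (abs_nonneg _) (le_one_of_mem_rowStochastic hM)

variable (hM : M ∈ rowStochastic ℝ S) (hγ0 : 0 ≤ γ) (hγ1 : γ < 1)
include hM hγ0 hγ1

lemma summable_pow_mul_pow_mulVec (v : S → ℝ) (i : S) :
    Summable fun t => γ ^ t * (M ^ t *ᵥ v) i :=
  summable_pow_mul_of_abs_le hγ0 hγ1 fun t => abs_mulVec_apply_le (pow_mem hM t) v i

lemma summable_pow_mul_vecMul_pow (v : S → ℝ) (j : S) :
    Summable fun t => γ ^ t * (v ᵥ* M ^ t) j :=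
  summable_pow_mul_of_abs_le hγ0 hγ1 fun t => abs_vecMul_apply_le (pow_mem hM t) v j

lemma tsum_pow_mul_pow_mulVec_eq (v : S → ℝ) :
    (fun i => ∑' t, γ ^ t * (M ^ t *ᵥ v) i) =
      v + γ • (M *ᵥ fun i => ∑' t, γ ^ t * (M ^ t *ᵥ v) i) := by
  ext i
  rw [tsum_pow_mul_eq_add (summable_pow_mul_pow_mulVec hM hγ0 hγ1 v i)]
  have h := tsum_pow_mul_sum_mul (summable_pow_mul_pow_mulVec hM hγ0 hγ1 v) (M i)
  simp only [pow_succ', ← mulVec_mulVec, pow_zero, one_mulVec]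
  exact congrArg _ (congrArg _ h)

lemma tsum_pow_mul_vecMul_pow_eq (v : S → ℝ) :
    (fun j => ∑' t, γ ^ t * (v ᵥ* M ^ t) j) =
      v + γ • ((fun j => ∑' t, γ ^ t * (v ᵥ* M ^ t) j) ᵥ* M) := by
  ext j
  rw [tsum_pow_mul_eq_add (summable_pow_mul_vecMul_pow hM hγ0 hγ1 v j)]
  have h := tsum_pow_mul_sum_mul (summable_pow_mul_vecMul_pow hM hγ0 hγ1 v) (fun i => M i j)
  simp only [pow_succ, ← vecMul_vecMul, pow_zero, vecMul_one]
  simp only [vecMul, dotProduct, mul_comm _ (M _ j)] at h ⊢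
  rw [h]
  simp only [Pi.add_apply, Pi.smul_apply, smul_eq_mul, vecMul, dotProduct, mul_comm (M _ j)]

end DiscountedSeries

section FlowEquation

variable {S : Type*} [Fintype S] {M M' : Matrix S S ℝ} {γ : ℝ} {ρ d d' : S → ℝ}

lemma abs_dotProduct_le_sum_abs_mul {v f : S → ℝ} {ε : ℝ} (hf : ∀ s, |f s| ≤ ε) :
    |v ⬝ᵥ f| ≤ (∑ s, |v s|) * ε := by
  refine (abs_sum_le_sum_abs _ _).trans ?_
  rw [sum_mul]
  exact sum_le_sum fun s _ => by
    rw [abs_mul]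
    exact mul_le_mul_of_nonneg_left (hf s) (abs_nonneg _)

lemma sum_abs_vecMul_le {m n : Type*} [Fintype m] [Fintype n] (v : m → ℝ) (N : Matrix m n ℝ) :
    ∑ j, |(v ᵥ* N) j| ≤ ∑ i, |v i| * ∑ j, |N i j| := by
  calc ∑ j, |(v ᵥ* N) j| ≤ ∑ j, ∑ i, |v i| * |N i j| :=
        sum_le_sum fun j _ => (abs_sum_le_sum_abs _ _).trans_eq (by simp only [abs_mul])
    _ = ∑ i, |v i| * ∑ j, |N i j| := by rw [sum_comm]; simp only [mul_sum]

lemma dotProduct_sub_smul_mulVec (hd : d = (1 - γ) • ρ + γ • (d ᵥ* M)) (V : S → ℝ) :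
    d ⬝ᵥ (V - γ • (M *ᵥ V)) = (1 - γ) * (ρ ⬝ᵥ V) := by
  rw [dotProduct_sub, dotProduct_smul, dotProduct_mulVec]
  conv_lhs => enter [1]; rw [hd]
  simp only [add_dotProduct, smul_dotProduct, smul_eq_mul]
  ring

variable [DecidableEq S]

lemma sum_eq_sum_of_eq_smul_add (hM : M ∈ rowStochastic ℝ S) (hγ1 : γ ≠ 1)
    (hd : d = (1 - γ) • ρ + γ • (d ᵥ* M)) : ∑ s, d s = ∑ s, ρ s := by
  have h := dotProduct_sub_smul_mulVec hd 1
  have hone : (1 : S → ℝ) - γ • 1 = (1 - γ) • 1 := by rw [sub_smul, one_smul]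
  rw [one_vecMul_of_mem_rowStochastic hM, hone, dotProduct_smul, smul_eq_mul, dotProduct_one,
    dotProduct_one] at h
  exact mul_left_cancel₀ (sub_ne_zero.2 hγ1.symm) h

lemma one_sub_mul_sum_abs_sub_le (hM' : M' ∈ rowStochastic ℝ S) (hγ0 : 0 ≤ γ)
    (hd0 : ∀ s, 0 ≤ d s) (hd : d = (1 - γ) • ρ + γ • (d ᵥ* M))
    (hd' : d' = (1 - γ) • ρ + γ • (d' ᵥ* M')) :
    (1 - γ) * ∑ s, |d' s - d s| ≤ γ * ∑ s, d s * ∑ s', |M' s s' - M s s'| := by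
  have hdiff : d' - d = γ • ((d' - d) ᵥ* M' + d ᵥ* (M' - M)) := by
    conv_lhs => rw [hd', hd]
    rw [sub_vecMul, vecMul_sub]
    module
  have hle : ∑ s, |(d' - d) s| ≤
      γ * (∑ s, |(d' - d) s| + ∑ s, d s * ∑ s', |M' s s' - M s s'|) :=
    calc ∑ s, |(d' - d) s| = γ * ∑ s, |((d' - d) ᵥ* M' + d ᵥ* (M' - M)) s| := by
          conv_lhs => rw [hdiff]
          simp only [Pi.smul_apply, smul_eq_mul, abs_mul, abs_of_nonneg hγ0, mul_sum]
      _ ≤ γ * (∑ s, |((d' - d) ᵥ* M') s| + ∑ s, |(d ᵥ* (M' - M)) s|) := by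
          rw [← sum_add_distrib]
          gcongr with s
          exact abs_add_le _ _
      _ ≤ γ * (∑ s, |(d' - d) s| + ∑ s, d s * ∑ s', |M' s s' - M s s'|) := by
          gcongr γ * (?_ + ?_)
          · refine (sum_abs_vecMul_le _ _).trans_eq (sum_congr rfl fun s _ => ?_)
            simp [abs_of_nonneg (nonneg_of_mem_rowStochastic hM'),
              sum_row_of_mem_rowStochastic hM']
          · refine (sum_abs_vecMul_le _ _).trans_eq (sum_congr rfl fun s _ => ?_)
            simp [abs_of_nonneg (hd0 s)]
  simp only [Pi.sub_apply] at hle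
  linarith

end FlowEquation

section MDP

variable {S A : Type*} [Fintype S] [Fintype A] {P : S → A → S → ℝ} {γ : ℝ}
  {ρ0 : S → ℝ} {F pol pol' : S → A → ℝ}

lemma transMat_mulVec_apply (V : S → ℝ) (s : S) :
    (transMat P pol *ᵥ V) s = ∑ a, pol s a * ∑ s', P s a s' * V s' := by
  simp only [mulVec, dotProduct, transMat, sum_mul, mul_sum, mul_assoc]
  exact sum_comm

lemma sum_abs_transMat_sub_le (hP : ∀ s a, P s a ∈ stdSimplex ℝ S) (s : S) :
    ∑ s', |transMat P pol' s s' - transMat P pol s s'| ≤ ∑ a, |pol' s a - pol s a| := by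
  calc ∑ s', |transMat P pol' s s' - transMat P pol s s'|
      = ∑ s', |∑ a, (pol' s a - pol s a) * P s a s'| := by
        simp only [transMat, ← sum_sub_distrib, sub_mul]
    _ ≤ ∑ s', ∑ a, |pol' s a - pol s a| * P s a s' := by
        gcongr with s'
        refine (abs_sum_le_sum_abs _ _).trans_eq (sum_congr rfl fun a _ => ?_)
        rw [abs_mul, abs_of_nonneg ((hP s a).1 s')]
    _ = ∑ a, |pol' s a - pol s a| := by
        rw [sum_comm]
        simp [← mul_sum, (hP s _).2]

lemma sq_sum_mul_sum_abs_sub_le {w : S → ℝ} (hw : w ∈ stdSimplex ℝ S)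
    (hpol : ∀ s, pol s ∈ stdSimplex ℝ A) (hpol' : ∀ s, pol' s ∈ stdSimplex ℝ A)
    (habs : ∀ s a, pol s a = 0 → pol' s a = 0) :
    (∑ s, w s * ∑ a, |pol' s a - pol s a|) ^ 2 ≤ 2 * ∑ s, w s * klState pol' pol s := by
  calc (∑ s, w s * ∑ a, |pol' s a - pol s a|) ^ 2
      ≤ (∑ s, w s) * ∑ s, w s * (∑ a, |pol' s a - pol s a|) ^ 2 :=
        sum_sq_le_sum_mul_sum_of_sq_le_mul _ (fun s _ => hw.1 s)
          (fun s _ => mul_nonneg (hw.1 s) (sq_nonneg _)) (fun s _ => le_of_eq (by ring))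
    _ ≤ 1 * ∑ s, w s * (2 * klState pol' pol s) := by
        rw [hw.2]
        gcongr with s
        · exact hw.1 s
        · exact pinsker (hpol' s) (hpol s) (habs s)
    _ = 2 * ∑ s, w s * klState pol' pol s := by
        rw [one_mul, mul_sum]
        exact sum_congr rfl fun s _ => by ring

variable [DecidableEq S]

lemma transMat_mem_rowStochastic (hP : ∀ s a, P s a ∈ stdSimplex ℝ S)
    (hpol : ∀ s, pol s ∈ stdSimplex ℝ A) : transMat P pol ∈ rowStochastic ℝ S := by
  refine mem_rowStochastic_iff_sum.2 ⟨fun s s' => ?_, fun s => ?_⟩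
  · exact sum_nonneg fun a _ => mul_nonneg ((hpol s).1 a) ((hP s a).1 s')
  · simp only [transMat]
    rw [sum_comm]
    simp [← mul_sum, (hP _ _).2, (hpol s).2]

lemma Vfun_eq_add (hM : transMat P pol ∈ rowStochastic ℝ S) (hγ0 : 0 ≤ γ) (hγ1 : γ < 1) :
    Vfun P γ F pol =
      (fun s => ∑ a, pol s a * F s a) + γ • (transMat P pol *ᵥ Vfun P γ F pol) :=
  tsum_pow_mul_pow_mulVec_eq hM hγ0 hγ1 _

lemma dVisit_eq_smul :
    dVisit P γ ρ0 pol = (1 - γ) • fun s => ∑' t, γ ^ t * (ρ0 ᵥ* transMat P pol ^ t) s :=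
  rfl

lemma dVisit_eq_add (hM : transMat P pol ∈ rowStochastic ℝ S) (hγ0 : 0 ≤ γ) (hγ1 : γ < 1) :
    dVisit P γ ρ0 pol = (1 - γ) • ρ0 + γ • (dVisit P γ ρ0 pol ᵥ* transMat P pol) := by
  conv_lhs => rw [dVisit_eq_smul, tsum_pow_mul_vecMul_pow_eq hM hγ0 hγ1]
  rw [dVisit_eq_smul, smul_vecMul]
  module

lemma dVisit_nonneg (hM : transMat P pol ∈ rowStochastic ℝ S) (hγ0 : 0 ≤ γ) (hγ1 : γ < 1)
    (hρ0 : ∀ s, 0 ≤ ρ0 s) (s : S) : 0 ≤ dVisit P γ ρ0 pol s :=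
  mul_nonneg (sub_nonneg.2 hγ1.le) (tsum_nonneg fun t => mul_nonneg (pow_nonneg hγ0 t)
    (nonneg_vecMul_of_mem_rowStochastic (pow_mem hM t) hρ0 s))

lemma sum_dVisit (hM : transMat P pol ∈ rowStochastic ℝ S) (hγ0 : 0 ≤ γ) (hγ1 : γ < 1) :
    ∑ s, dVisit P γ ρ0 pol s = ∑ s, ρ0 s :=
  sum_eq_sum_of_eq_smul_add hM hγ1.ne (dVisit_eq_add hM hγ0 hγ1)

lemma sum_mul_Adv_eq (hpol' : ∀ s, ∑ a, pol' s a = 1) :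
    (fun s => ∑ a, pol' s a * Adv P γ F pol s a) =
      (fun s => ∑ a, pol' s a * F s a) -
        (Vfun P γ F pol - γ • (transMat P pol' *ᵥ Vfun P γ F pol)) := by
  ext s
  simp only [Adv, Qfun, Pi.sub_apply, Pi.smul_apply, smul_eq_mul, transMat_mulVec_apply,
    mul_sub, mul_add, sum_sub_distrib, sum_add_distrib, ← sum_mul, hpol' s, mul_sum]
  simp only [one_mul, mul_left_comm _ γ]
  ring

theorem performance_difference (hP : ∀ s a, P s a ∈ stdSimplex ℝ S) (hγ0 : 0 ≤ γ)
    (hγ1 : γ < 1) (hpol' : ∀ s, pol' s ∈ stdSimplex ℝ A) :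
    (1 - γ) * (Jret P γ ρ0 F pol' - Jret P γ ρ0 F pol) =
      dVisit P γ ρ0 pol' ⬝ᵥ fun s => ∑ a, pol' s a * Adv P γ F pol s a := by
  have hM' := transMat_mem_rowStochastic hP hpol'
  have hd' := dVisit_eq_add (ρ0 := ρ0) hM' hγ0 hγ1
  have hV' : (fun s => ∑ a, pol' s a * F s a) =
      Vfun P γ F pol' - γ • (transMat P pol' *ᵥ Vfun P γ F pol') := by
    rw [eq_sub_iff_add_eq, ← Vfun_eq_add hM' hγ0 hγ1]
  rw [sum_mul_Adv_eq fun s => (hpol' s).2, dotProduct_sub, hV',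
    dotProduct_sub_smul_mulVec hd', dotProduct_sub_smul_mulVec hd']
  simp only [Jret, dotProduct]
  ring

lemma one_sub_mul_sum_abs_dVisit_sub_le (hP : ∀ s a, P s a ∈ stdSimplex ℝ S) (hγ0 : 0 ≤ γ)
    (hγ1 : γ < 1) (hρ0 : ∀ s, 0 ≤ ρ0 s) (hpol : ∀ s, pol s ∈ stdSimplex ℝ A)
    (hpol' : ∀ s, pol' s ∈ stdSimplex ℝ A) :
    (1 - γ) * ∑ s, |dVisit P γ ρ0 pol' s - dVisit P γ ρ0 pol s| ≤
      γ * ∑ s, dVisit P γ ρ0 pol s * ∑ a, |pol' s a - pol s a| := by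
  have hM := transMat_mem_rowStochastic hP hpol
  have hM' := transMat_mem_rowStochastic hP hpol'
  have hd0 := dVisit_nonneg hM hγ0 hγ1 hρ0
  refine (one_sub_mul_sum_abs_sub_le hM' hγ0 hd0 (dVisit_eq_add hM hγ0 hγ1)
    (dVisit_eq_add hM' hγ0 hγ1)).trans ?_
  gcongr with s
  · exact hd0 s
  · exact sum_abs_transMat_sub_le hP s

lemma abs_sum_mul_Adv_le_epsAdv [Nonempty S] (s : S) :
    |∑ a, pol' s a * Adv P γ F pol s a| ≤ epsAdv P γ F pol pol' :=
  le_sup' (fun s => |∑ a, pol' s a * Adv P γ F pol s a|) (mem_univ s)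

end MDP

theorem trust_region_worst_case_general {S A : Type*} [Fintype S] [DecidableEq S] [Fintype A] [Nonempty S]
    (P : S → A → S → ℝ) (hP0 : ∀ s a s', 0 ≤ P s a s') (hP1 : ∀ s a, ∑ s', P s a s' = 1)
    (γ : ℝ) (hγ0 : 0 < γ) (hγ1 : γ < 1)
    (ρ0 : S → ℝ) (hρ0 : ∀ s, 0 ≤ ρ0 s) (hρ1 : ∑ s, ρ0 s = 1)
    (δ : ℝ) (F : S → A → ℝ)
    (pol : S → A → ℝ) (hpol0 : ∀ s a, 0 ≤ pol s a) (hpol1 : ∀ s, ∑ a, pol s a = 1) (pol' : S → A → ℝ) (hpol'0 : ∀ s a, 0 ≤ pol' s a) (hpol'1 : ∀ s, ∑ a, pol' s a = 1)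
    (habs : ∀ s a, pol s a = 0 → pol' s a = 0)
    (hKL : avgKL P γ ρ0 pol' pol ≤ δ)
    (hA : 0 ≤ surrAdv P γ ρ0 F pol pol') :
    Jret P γ ρ0 F pol' - Jret P γ ρ0 F pol ≥
      - (Real.sqrt (2 * δ) * γ * epsAdv P γ F pol pol' / (1 - γ) ^ 2) := by
  have hP : ∀ s a, P s a ∈ stdSimplex ℝ S := fun s a => ⟨hP0 s a, hP1 s a⟩
  have hpol : ∀ s, pol s ∈ stdSimplex ℝ A := fun s => ⟨hpol0 s, hpol1 s⟩
  have hpol' : ∀ s, pol' s ∈ stdSimplex ℝ A := fun s => ⟨hpol'0 s, hpol'1 s⟩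
  have hM := transMat_mem_rowStochastic hP hpol
  set d := dVisit P γ ρ0 pol
  set d' := dVisit P γ ρ0 pol'
  set f := fun s => ∑ a, pol' s a * Adv P γ F pol s a
  set ε := epsAdv P γ F pol pol'
  have hd : d ∈ stdSimplex ℝ S :=
    ⟨dVisit_nonneg hM hγ0.le hγ1 hρ0, by rw [sum_dVisit hM hγ0.le hγ1, hρ1]⟩
  have hε : 0 ≤ ε := (abs_nonneg _).trans (abs_sum_mul_Adv_le_epsAdv (Classical.arbitrary S))
  have hgain : (1 - γ) * (Jret P γ ρ0 F pol' - Jret P γ ρ0 F pol) = d ⬝ᵥ f + (d' - d) ⬝ᵥ f := by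
    rw [performance_difference hP hγ0.le hγ1 hpol', sub_dotProduct]
    ring
  have hshift : |(d' - d) ⬝ᵥ f| ≤ (∑ s, |d' s - d s|) * ε :=
    abs_dotProduct_le_sum_abs_mul abs_sum_mul_Adv_le_epsAdv
  have hTV : ∑ s, d s * ∑ a, |pol' s a - pol s a| ≤ √(2 * δ) :=
    Real.le_sqrt_of_sq_le ((sq_sum_mul_sum_abs_sub_le hd hpol hpol' habs).trans (by
      change 2 * avgKL P γ ρ0 pol' pol ≤ 2 * δ
      linarith))
  have hdist : (1 - γ) * ∑ s, |d' s - d s| ≤ γ * √(2 * δ) :=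
    (one_sub_mul_sum_abs_dVisit_sub_le hP hγ0.le hγ1 hρ0 hpol hpol').trans
      (mul_le_mul_of_nonneg_left hTV hγ0.le)
  have h1γ : 0 < 1 - γ := sub_pos.2 hγ1
  rw [ge_iff_le, ← neg_div, div_le_iff₀ (pow_pos h1γ 2)]
  have hA' : 0 ≤ d ⬝ᵥ f := hA
  nlinarith [abs_le.1 hshift, mul_le_mul_of_nonneg_right hdist hε]

/-- trust-region worst-case update bound (Lemma A.1, operational form). -/
theorem trust_region_worst_case {S A : Type*} [Fintype S] [DecidableEq S] [Fintype A] [Nonempty S] [Nonempty A]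
    (P : S → A → S → ℝ) (hP0 : ∀ s a s', 0 ≤ P s a s') (hP1 : ∀ s a, ∑ s', P s a s' = 1)
    (γ : ℝ) (hγ0 : 0 < γ) (hγ1 : γ < 1)
    (ρ0 : S → ℝ) (hρ0 : ∀ s, 0 ≤ ρ0 s) (hρ1 : ∑ s, ρ0 s = 1)
    (δ : ℝ) (hδ : 0 < δ) (F : S → A → ℝ)
    (pol : S → A → ℝ) (hpol0 : ∀ s a, 0 ≤ pol s a) (hpol1 : ∀ s, ∑ a, pol s a = 1) (pol' : S → A → ℝ) (hpol'0 : ∀ s a, 0 ≤ pol' s a) (hpol'1 : ∀ s, ∑ a, pol' s a = 1)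
    (habs : ∀ s a, pol s a = 0 → pol' s a = 0)
    (hKL : avgKL P γ ρ0 pol' pol ≤ δ)
    (hA : 0 ≤ surrAdv P γ ρ0 F pol pol') :
    Jret P γ ρ0 F pol' - Jret P γ ρ0 F pol ≥
      - (Real.sqrt (2 * δ) * γ * epsAdv P γ F pol pol' / (1 - γ) ^ 2) :=
  trust_region_worst_case_general P hP0 hP1 γ hγ0 hγ1 ρ0 hρ0 hρ1 δ F pol hpol0 hpol1 pol' hpol'0
    hpol'1 habs hKL hA
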